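/- arXiv:1608.02257 — 3 statements merged into one kernel-verified Lean document; each statement's English description precedes it below -/
import Mathlib

section
/- Let X⋆ be an n×m real matrix of rank k, and suppose n₁ + MS_{k-1}(X⋆) < n, where MS_{k-1}(X⋆) is the maximum size of a row-index set I with rank(X⋆^I) ≤ k−1. Let X be any (n+n₁)×m matrix obtained by inserting n₁ arbitrary additional rows into X⋆. Then for every index set I ⊆ {1,...,n+n₁} with |I| = n and rank(X^I) = k, the row space of X^I equals the row space of X⋆. -/
open Matrix

noncomputable def subRows {n m : ℕ} (M : Matrix (Fin n) (Fin m) ℝ) (I : Finset (Fin n)) :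
    Matrix {i // i ∈ I} (Fin m) ℝ := fun i j => M i.1 j

noncomputable def MS {n m : ℕ} (M : Matrix (Fin n) (Fin m) ℝ) (r : ℕ) : ℕ :=
  sSup {c | ∃ I : Finset (Fin n), I.card = c ∧ (subRows M I).rank ≤ r}

/-- The row space of a matrix: the span of its rows in `ℝ^m`. -/
noncomputable def rowSpace {ι : Type*} {m : ℕ} (M : Matrix ι (Fin m) ℝ) :
    Submodule ℝ (Fin m → ℝ) := Submodule.span ℝ (Set.range fun i => M i)

lemma rank_eq_finrank_rowSpace {ι : Type*} [Finite ι] {m : ℕ} (M : Matrix ι (Fin m) ℝ) :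
    M.rank = Module.finrank ℝ (rowSpace M) :=
  M.rank_eq_finrank_span_row

theorem noise_free_recovery (n n₁ m k : ℕ)
    (Xstar : Matrix (Fin n) (Fin m) ℝ) (hrank : Xstar.rank = k)
    (hMS : n₁ + MS Xstar (k - 1) < n)
    (X : Matrix (Fin (n + n₁)) (Fin m) ℝ)
    (ι : Fin n → Fin (n + n₁)) (hι : Function.Injective ι)
    (hX : ∀ i : Fin n, X (ι i) = Xstar i) :
    ∀ I : Finset (Fin (n + n₁)), I.card = n → (subRows X I).rank = k →
      rowSpace (subRows X I) = rowSpace Xstar := by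
  classical
  intro I hIcard hIrank
  set T : Finset (Fin (n + n₁)) := Finset.univ.image ι with hTdef
  set J : Finset (Fin n) := Finset.univ.filter (fun i => ι i ∈ I) with hJdef
  have hTcard : T.card = n := by
    rw [hTdef, Finset.card_image_of_injective _ hι, Finset.card_univ, Fintype.card_fin]
  have hJimage : J.image ι = I ∩ T := by
    ext x
    simp only [hJdef, hTdef, Finset.mem_image, Finset.mem_inter, Finset.mem_filter,
      Finset.mem_univ, true_and]
    constructor
    · rintro ⟨i, hi, rfl⟩; exact ⟨hi, i, rfl⟩
    · rintro ⟨hx, i, rfl⟩; exact ⟨i, hx, rfl⟩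
  have hJcard : J.card = (I ∩ T).card := by
    rw [← hJimage, Finset.card_image_of_injective _ hι]
  have hsplit : (I ∩ T).card + (I \ T).card = I.card := Finset.card_inter_add_card_sdiff I T
  have hsd : (I \ T).card ≤ n₁ := by
    have hsub : I \ T ⊆ Tᶜ := fun x hx => by
      simp only [Finset.mem_compl]
      exact (Finset.mem_sdiff.mp hx).2
    have := Finset.card_le_card hsub
    rw [Finset.card_compl, hTcard, Fintype.card_fin] at this
    omega
  have hJge : n - n₁ ≤ J.card := by omega
  -- the row space of the selected true rows sits inside that of Xstar
  have hrowle : rowSpace (subRows Xstar J) ≤ rowSpace Xstar := by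
    apply Submodule.span_mono
    rintro _ ⟨i, rfl⟩
    exact ⟨i.1, rfl⟩
  have hJle : (subRows Xstar J).rank ≤ k := by
    rw [rank_eq_finrank_rowSpace, ← hrank, rank_eq_finrank_rowSpace]
    exact Submodule.finrank_mono hrowle
  have hJrank : (subRows Xstar J).rank = k := by
    by_contra hne
    have h1 : (subRows Xstar J).rank ≤ k - 1 := by omega
    have hbdd : BddAbove {c | ∃ I' : Finset (Fin n),
        I'.card = c ∧ (subRows Xstar I').rank ≤ k - 1} := by
      refine ⟨n, fun c hc => ?_⟩
      obtain ⟨I', hI', -⟩ := hc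
      rw [← hI']
      calc I'.card ≤ (Finset.univ : Finset (Fin n)).card := Finset.card_le_univ I'
        _ = n := by simp
    have hmem : J.card ∈ {c | ∃ I' : Finset (Fin n),
        I'.card = c ∧ (subRows Xstar I').rank ≤ k - 1} := ⟨J, rfl, h1⟩
    have hle : J.card ≤ MS Xstar (k - 1) := le_csSup hbdd hmem
    omega
  -- rows of subRows Xstar J are rows of subRows X I
  have hrowle2 : rowSpace (subRows Xstar J) ≤ rowSpace (subRows X I) := by
    apply Submodule.span_mono
    rintro _ ⟨i, rfl⟩
    have hmemI : ι i.1 ∈ I := by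
      have h2 : i.1 ∈ Finset.filter (fun i => ι i ∈ I) Finset.univ := i.2
      exact (Finset.mem_filter.mp h2).2
    refine ⟨⟨ι i.1, hmemI⟩, ?_⟩
    funext j
    simp [subRows, hX]
  have e1 : rowSpace (subRows Xstar J) = rowSpace Xstar := by
    apply Submodule.eq_of_le_of_finrank_le hrowle
    rw [← rank_eq_finrank_rowSpace, ← rank_eq_finrank_rowSpace, hrank, hJrank]
  have e2 : rowSpace (subRows Xstar J) = rowSpace (subRows X I) := by
    apply Submodule.eq_of_le_of_finrank_le hrowle2
    rw [← rank_eq_finrank_rowSpace, ← rank_eq_finrank_rowSpace, hIrank, hJrank]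
  rw [← e2, e1]
end

section
/- Let X⋆ be an n×m real matrix of rank k with n₁ + MS_{k-1}(X⋆) < n, and let X be obtained from X⋆ by inserting n₁ arbitrary rows. Then there exists an index set I ⊆ {1,...,n+n₁} with |I| = n and rank(X^I) = k; moreover, for any such I, the intersection of I with the original row indices has size at least n − n₁ > MS_{k-1}(X⋆), forcing the corresponding rows of X⋆ to have rank exactly k. -/
/-!
All `n` original rows together have rank `k`, which gives the first index set. Any index set of
size `n` misses at most `n₁` original rows, so it contains at least `n - n₁ > MS_{k-1}(X⋆)` of
them; by the definition of `MS` these cannot span a space of dimension `≤ k - 1`, and they cannot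
span more than the row space of `X⋆`.
-/

open Matrix

lemma rank_subRows_le {n m : ℕ} (M : Matrix (Fin n) (Fin m) ℝ) (I : Finset (Fin n)) :
    (subRows M I).rank ≤ M.rank := by
  rw [rank_eq_finrank_span_row, rank_eq_finrank_span_row]
  apply Submodule.finrank_mono
  apply Submodule.span_mono
  rintro _ ⟨i, rfl⟩
  exact ⟨i.1, rfl⟩

lemma rank_subRows_image {n n' m : ℕ} (X : Matrix (Fin n') (Fin m) ℝ)
    (Y : Matrix (Fin n) (Fin m) ℝ) (ι : Fin n → Fin n') (hX : ∀ i, X (ι i) = Y i) :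
    (subRows X (Finset.image ι Finset.univ)).rank = Y.rank := by
  have hrange : Set.range (subRows X (Finset.image ι Finset.univ)) = Set.range Y := by
    ext v
    constructor
    · rintro ⟨⟨j, hj⟩, rfl⟩
      obtain ⟨i, -, rfl⟩ := Finset.mem_image.mp hj
      exact ⟨i, (hX i).symm⟩
    · rintro ⟨i, rfl⟩
      exact ⟨⟨ι i, Finset.mem_image_of_mem ι (Finset.mem_univ i)⟩, hX i⟩
  rw [rank_eq_finrank_span_row, rank_eq_finrank_span_row]
  exact congrArg (fun S => Module.finrank ℝ (Submodule.span ℝ S)) hrange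

lemma card_le_MS {n m : ℕ} (M : Matrix (Fin n) (Fin m) ℝ) {r : ℕ} {J : Finset (Fin n)}
    (hJ : (subRows M J).rank ≤ r) : J.card ≤ MS M r := by
  refine le_csSup ⟨n, ?_⟩ ⟨J, rfl, hJ⟩
  rintro c ⟨I, rfl, -⟩
  simpa using Finset.card_le_univ I

lemma rank_subRows_eq_of_MS_lt {n m k : ℕ} (M : Matrix (Fin n) (Fin m) ℝ) (hM : M.rank = k)
    {J : Finset (Fin n)} (hJ : MS M (k - 1) < J.card) : (subRows M J).rank = k := by
  have hle : (subRows M J).rank ≤ k := hM ▸ rank_subRows_le M J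
  by_contra hne
  have := card_le_MS M (J := J) (r := k - 1) (by omega)
  omega

lemma Finset.card_sub_card_compl_le_card_inter {α : Type*} [Fintype α] [DecidableEq α]
    (I A : Finset α) : I.card - (Fintype.card α - A.card) ≤ (I ∩ A).card := by
  have hsplit := Finset.card_inter_add_card_sdiff I A
  have hout : (I \ A).card ≤ (Finset.univ \ A).card :=
    Finset.card_le_card (Finset.sdiff_subset_sdiff (Finset.subset_univ I) le_rfl)
  rw [Finset.card_univ_sdiff] at hout
  omega

lemma Finset.card_filter_mem_eq_card_inter_image {α β : Type*} [Fintype α] [DecidableEq β]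
    {ι : α → β} (hι : Function.Injective ι) (I : Finset β) :
    (Finset.univ.filter fun i => ι i ∈ I).card = (I ∩ Finset.image ι Finset.univ).card := by
  rw [← Finset.card_image_of_injective _ hι]
  congr 1
  ext j
  simp only [Finset.mem_image, Finset.mem_filter, Finset.mem_univ, true_and, Finset.mem_inter]
  constructor
  · rintro ⟨i, hi, rfl⟩
    exact ⟨hi, i, rfl⟩
  · rintro ⟨hj, i, rfl⟩
    exact ⟨i, hj, rfl⟩

theorem exists_good_index_set (n n₁ m k : ℕ)
    (Xstar : Matrix (Fin n) (Fin m) ℝ) (hrank : Xstar.rank = k)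
    (hMS : n₁ + MS Xstar (k - 1) < n)
    (X : Matrix (Fin (n + n₁)) (Fin m) ℝ)
    (ι : Fin n → Fin (n + n₁)) (hι : Function.Injective ι)
    (hX : ∀ i : Fin n, X (ι i) = Xstar i) :
    (∃ I : Finset (Fin (n + n₁)), I.card = n ∧ (subRows X I).rank = k) ∧
    ∀ I : Finset (Fin (n + n₁)), I.card = n → (subRows X I).rank = k →
      (I ∩ Finset.image ι Finset.univ).card ≥ n - n₁ ∧
      n - n₁ > MS Xstar (k - 1) ∧
      (subRows Xstar (Finset.univ.filter fun i => ι i ∈ I)).rank = k := by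
  have hAcard : (Finset.image ι Finset.univ).card = n := by
    simp [Finset.card_image_of_injective _ hι]
  refine ⟨⟨_, hAcard, hrank ▸ rank_subRows_image X Xstar ι hX⟩, fun I hcard _ => ?_⟩
  have hinter : (I ∩ Finset.image ι Finset.univ).card ≥ n - n₁ := by
    have := Finset.card_sub_card_compl_le_card_inter I (Finset.image ι Finset.univ)
    rw [hcard, hAcard, Fintype.card_fin] at this
    omega
  refine ⟨hinter, by omega, rank_subRows_eq_of_MS_lt Xstar hrank ?_⟩
  rw [Finset.card_filter_mem_eq_card_inter_image hι]
  omega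
end

section
/- Let X⋆ be an n×m matrix of rank k with n₁ + MS_{k-1}(X⋆) < n, and let X be X⋆ augmented with n₁ additional rows. Let I ⊆ {1,...,n+n₁} be any index set with |I| = n such that rank(X^I) ≤ k. Then the row space of X^I contains the row space of X⋆, and hence rank(X^I) = k and the row spaces are equal. -/
open Matrix

lemma rank_eq_finrank_rowSpace_s14 {p m : ℕ} (M : Matrix (Fin p) (Fin m) ℝ)
    (I : Finset (Fin p)) :
    (subRows M I).rank = Module.finrank ℝ (rowSpace (subRows M I)) :=
  Matrix.rank_eq_finrank_span_row _

theorem low_rank_subset_recovers (n n₁ m k : ℕ)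
    (Xstar : Matrix (Fin n) (Fin m) ℝ) (hrank : Xstar.rank = k)
    (hMS : n₁ + MS Xstar (k - 1) < n)
    (X : Matrix (Fin (n + n₁)) (Fin m) ℝ)
    (ι : Fin n → Fin (n + n₁)) (hι : Function.Injective ι)
    (hX : ∀ i : Fin n, X (ι i) = Xstar i) :
    ∀ I : Finset (Fin (n + n₁)), I.card = n → (subRows X I).rank ≤ k →
      rowSpace Xstar ≤ rowSpace (subRows X I) ∧
      (subRows X I).rank = k ∧
      rowSpace (subRows X I) = rowSpace Xstar := by
  intro I hcard hrle
  -- J : indices of original rows that survive in I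
  set J : Finset (Fin n) := Finset.univ.filter (fun i => ι i ∈ I) with hJ
  -- |J| ≥ n - n₁
  have hJcard : n - n₁ ≤ J.card := by
    have hIm : (Finset.univ.image ι).card = n := by
      rw [Finset.card_image_of_injective _ hι, Finset.card_univ, Fintype.card_fin]
    have h1 : (I \ Finset.univ.image ι).card ≤ n₁ := by
      have := Finset.card_le_card (Finset.sdiff_subset_sdiff (Finset.subset_univ I)
        (le_refl (Finset.univ.image ι)))
      calc (I \ Finset.univ.image ι).card
          ≤ (Finset.univ \ Finset.univ.image ι).card := this
        _ = (n + n₁) - n := by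
            rw [Finset.card_sdiff_of_subset (Finset.subset_univ _), Finset.card_univ,
              Fintype.card_fin, hIm]
        _ = n₁ := by omega
    have h2 : (I ∩ Finset.univ.image ι).card + (I \ Finset.univ.image ι).card = I.card :=
      Finset.card_inter_add_card_sdiff I _
    have h3 : J.card = (I ∩ Finset.univ.image ι).card := by
      rw [hJ]
      apply Finset.card_bij (fun i _ => ι i)
      · intro a ha
        simp only [Finset.mem_filter, Finset.mem_univ, true_and] at ha
        simp [ha]
      · intro a ha b hb hab; exact hι hab
      · intro b hb
        simp only [Finset.mem_inter, Finset.mem_image, Finset.mem_univ, true_and] at hb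
        obtain ⟨hbI, a, rfl⟩ := hb
        exact ⟨a, by simp [hbI], rfl⟩
    omega
  -- rank of Xstar restricted to J is ≥ k
  have hMSle : ∀ (K : Finset (Fin n)), (subRows Xstar K).rank ≤ k - 1 →
      K.card ≤ MS Xstar (k - 1) := by
    intro K hK
    apply le_csSup
    · refine ⟨n, ?_⟩
      rintro c ⟨L, rfl, -⟩
      simpa using Finset.card_le_card (Finset.subset_univ L)
    · exact ⟨K, rfl, hK⟩
  have hJrankge : k ≤ (subRows Xstar J).rank := by
    by_contra h
    push_neg at h
    have hk : (subRows Xstar J).rank ≤ k - 1 := by omega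
    have := hMSle J hk
    omega
  -- rows of subRows Xstar J are among rows of subRows X I
  have hrowsub : rowSpace (subRows Xstar J) ≤ rowSpace (subRows X I) := by
    apply Submodule.span_le.2
    rintro v ⟨⟨i, hi⟩, rfl⟩
    have hiI : ι i ∈ I := by simpa [hJ] using hi
    have : subRows X I ⟨ι i, hiI⟩ = subRows Xstar J ⟨i, hi⟩ := by
      funext j; simp [subRows, hX i]
    exact Submodule.subset_span ⟨⟨ι i, hiI⟩, this⟩
  -- rows of subRows Xstar J are among rows of Xstar
  have hrowsub2 : rowSpace (subRows Xstar J) ≤ rowSpace Xstar := by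
    apply Submodule.span_le.2
    rintro v ⟨⟨i, hi⟩, rfl⟩
    exact Submodule.subset_span ⟨i, rfl⟩
  have hfin1 : (subRows Xstar J).rank = Module.finrank ℝ (rowSpace (subRows Xstar J)) :=
    rank_eq_finrank_rowSpace_s14 _ _
  have hfin2 : (subRows X I).rank = Module.finrank ℝ (rowSpace (subRows X I)) :=
    rank_eq_finrank_rowSpace_s14 _ _
  have hfinX : Xstar.rank = Module.finrank ℝ (rowSpace Xstar) :=
    Matrix.rank_eq_finrank_span_row _
  -- finrank of rowSpace (subRows Xstar J) = k, so rowSpace (subRows Xstar J) = rowSpace Xstar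
  have hJeq : rowSpace (subRows Xstar J) = rowSpace Xstar := by
    apply Submodule.eq_of_le_of_finrank_le hrowsub2
    rw [← hfinX, hrank, ← hfin1] at *
    exact hJrankge
  have hstar_le : rowSpace Xstar ≤ rowSpace (subRows X I) := hJeq ▸ hrowsub
  have hrge : k ≤ (subRows X I).rank := by
    rw [hfin2]
    calc k = Module.finrank ℝ (rowSpace Xstar) := by rw [← hfinX, hrank]
      _ ≤ Module.finrank ℝ (rowSpace (subRows X I)) := Submodule.finrank_mono hstar_le
  have hreq : (subRows X I).rank = k := le_antisymm hrle hrge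
  refine ⟨hstar_le, hreq, ?_⟩
  symm
  apply Submodule.eq_of_le_of_finrank_le hstar_le
  rw [← hfin2, hreq, ← hfinX, hrank]
end
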